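/- arXiv:2507.13219 — 6 statements merged into one kernel-verified Lean document; each statement's English description precedes it below -/
import Mathlib

section
/- Let m, n be positive integers, σ : {1,…,n} → {1,…,m}, let a_1,…,a_n, ħ be nonzero complex numbers and 0 < |q| < 1, and define Φ_f := ∏_{i'=1}^{m-1} ∏_{(j,k): j≠k, σ(j)≤i', σ(k)≤i'} [Φ(q a_j/a_k)Φ(a_j/a_k) / (Φ(ħ^{-1}a_j/a_k)Φ(qħ a_j/a_k))] · ∏_{(k,l): σ(k)<σ(l)} [Φ(q a_k/a_l)/Φ(ħ^{-1}a_k/a_l)], where the first product is over ordered pairs. Then for every i ∈ {1,…,n}, the value of Φ_f with a_i replaced by q a_i, divided by Φ_f, equals ∏_{j: σ(j)<σ(i)} (1 − a_j/a_i)/(1 − a_j/(qħ a_i)) · ∏_{j: σ(j)>σ(i)} (1 − ħ^{-1}a_i/a_j)/(1 − q a_i/a_j), whenever all occurring denominators are nonzero. -/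
/-- `Φ(x) = ∏_{i≥0} (1 - x qⁱ)`. -/
noncomputable def Phi (q x : ℂ) : ℂ := ∏' i : ℕ, (1 - x * q ^ i)

/-- The explicit infinite product `Φ_f = Φ((q - ħ⁻¹)𝒫|_f)` (with the constant diagonal
factors removed) attached to the fixed point `σ` of a separated bow variety all of whose
D5 branes have weight one.  Indices are zero-based: the `i'`-th factor of the outer
product (for `i' ∈ {0,…,m-2}`) corresponds to the paper's index `i'+1`, and `σ j`
corresponds to the paper's value `σ(j) = (σ j) + 1`. -/
noncomputable def PhiSep {m n : ℕ} (q h : ℂ) (σ : Fin n → Fin m) (a : Fin n → ℂ) : ℂ :=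
  (∏ i' ∈ Finset.range (m - 1), ∏ j : Fin n, ∏ k : Fin n,
      if j ≠ k ∧ (σ j : ℕ) ≤ i' ∧ (σ k : ℕ) ≤ i' then
        Phi q (q * (a j / a k)) * Phi q (a j / a k) /
          (Phi q (h⁻¹ * (a j / a k)) * Phi q (q * h * (a j / a k)))
      else 1) *
    ∏ k : Fin n, ∏ l : Fin n,
      if σ k < σ l then Phi q (q * (a k / a l)) / Phi q (h⁻¹ * (a k / a l)) else 1

/-!
By `Φ(x) = (1 - x) Φ(qx)`, every factor of the second product of `Φ_f` that involves `a_i`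
changes by an explicit rational factor under `a_i ↦ q a_i`, and these factors make up the
right-hand side. The factors of the first product are not invariant one by one, but the
factors of `(j, k)` and `(k, j)` multiply to `θ(x) θ(qx) / (θ(ħ⁻¹x) θ(qħx))`, where
`x = a_j / a_k` and `θ(x) = Φ(x) Φ(q/x)`. Since `θ(qx) = -x⁻¹ θ(x)`, numerator and denominator
both pick up the factor `(q x²)⁻¹`, so these pair products do not change.
-/

lemma multipliable_one_sub_mul_pow {q : ℂ} (hq : ‖q‖ < 1) (x : ℂ) :
    Multipliable fun i : ℕ => 1 - x * q ^ i := by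
  simpa [sub_eq_add_neg] using Complex.multipliable_one_add_of_summable
    ((summable_geometric_of_norm_lt_one hq).mul_left x).neg

lemma Phi_eq_one_sub_mul {q : ℂ} (hq : ‖q‖ < 1) (x : ℂ) :
    Phi q x = (1 - x) * Phi q (q * x) := by
  have hshift : ∀ i : ℕ, 1 - x * q ^ (i + 1) = 1 - q * x * q ^ i := fun i => by ring
  have hm : Multipliable fun i : ℕ => 1 - x * q ^ (i + 1) := by
    rw [funext hshift]; exact multipliable_one_sub_mul_pow hq (q * x)
  rw [Phi, tprod_eq_zero_mul' (f := fun i : ℕ => 1 - x * q ^ i) hm, Phi, funext hshift, pow_zero,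
    mul_one]

noncomputable def theta (q x : ℂ) : ℂ := Phi q x * Phi q (q * x⁻¹)

lemma theta_q_mul {q : ℂ} (hq : ‖q‖ < 1) (hq0 : q ≠ 0) {x : ℂ} (hx : x ≠ 0) :
    theta q (q * x) = -x⁻¹ * theta q x := by
  have hinv : q * (q * x)⁻¹ = x⁻¹ := by field_simp
  rw [theta, theta, hinv, Phi_eq_one_sub_mul hq x, Phi_eq_one_sub_mul hq x⁻¹]
  field_simp
  ring

noncomputable def thetaRatio (q h x : ℂ) : ℂ :=
  theta q x * theta q (q * x) / (theta q (h⁻¹ * x) * theta q (q * h * x))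

lemma thetaRatio_q_mul {q h : ℂ} (hq : ‖q‖ < 1) (hq0 : q ≠ 0) (hh0 : h ≠ 0) {x : ℂ} (hx : x ≠ 0) :
    thetaRatio q h (q * x) = thetaRatio q h x := by
  have hc : (q * x ^ 2)⁻¹ ≠ 0 := by positivity
  have hnum : theta q (q * x) * theta q (q * (q * x)) =
      (q * x ^ 2)⁻¹ * (theta q x * theta q (q * x)) := by
    rw [theta_q_mul hq hq0 (by positivity : q * x ≠ 0), theta_q_mul hq hq0 hx]
    field_simp
  have hden : theta q (h⁻¹ * (q * x)) * theta q (q * h * (q * x)) =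
      (q * x ^ 2)⁻¹ * (theta q (h⁻¹ * x) * theta q (q * h * x)) := by
    rw [mul_left_comm h⁻¹, mul_left_comm (q * h), theta_q_mul hq hq0 (by positivity : h⁻¹ * x ≠ 0),
      theta_q_mul hq hq0 (by positivity : q * h * x ≠ 0)]
    field_simp
  rw [thetaRatio, thetaRatio, hnum, hden, mul_div_mul_left _ _ hc]

section RowColumn

variable {ι M : Type*} [Fintype ι] [DecidableEq ι] [CommMonoid M]

open Finset

lemma prod_prod_eq_diag_mul_row_col_mul (f : ι → ι → M) (i : ι) :
    ∏ j, ∏ k, f j k =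
      f i i * (∏ k ∈ univ.erase i, f i k * f k i) *
        ∏ j ∈ univ.erase i, ∏ k ∈ univ.erase i, f j k := by
  have hrow : ∀ j, ∏ k, f j k = f j i * ∏ k ∈ univ.erase i, f j k := fun j =>
    (mul_prod_erase univ (f j) (mem_univ i)).symm
  rw [← mul_prod_erase univ _ (mem_univ i), hrow i, prod_congr rfl fun j _ => hrow j,
    prod_mul_distrib, prod_mul_distrib]
  ac_rfl

lemma prod_prod_eq_prod_erase_mul_of_row_col {f g : ι → ι → M} {c : ι → M} (i : ι)
    (hii : f i i = g i i) (hpair : ∀ k, k ≠ i → f i k * f k i = c k * (g i k * g k i))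
    (hrest : ∀ j, j ≠ i → ∀ k, k ≠ i → f j k = g j k) :
    ∏ j, ∏ k, f j k = (∏ k ∈ univ.erase i, c k) * ∏ j, ∏ k, g j k := by
  rw [prod_prod_eq_diag_mul_row_col_mul f i, prod_prod_eq_diag_mul_row_col_mul g i, hii,
    prod_congr rfl fun k hk => hpair k (ne_of_mem_erase hk), prod_mul_distrib,
    prod_congr rfl fun j hj =>
      prod_congr rfl fun k hk => hrest j (ne_of_mem_erase hj) k (ne_of_mem_erase hk)]
  ac_rfl

end RowColumn

noncomputable def blockFactor (q h x : ℂ) : ℂ :=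
  Phi q (q * x) * Phi q x / (Phi q (h⁻¹ * x) * Phi q (q * h * x))

noncomputable def flagFactor (q h x : ℂ) : ℂ :=
  Phi q (q * x) / Phi q (h⁻¹ * x)

lemma PhiSep_eq_prod {m n : ℕ} (q h : ℂ) (σ : Fin n → Fin m) (a : Fin n → ℂ) :
    PhiSep q h σ a =
      (∏ i' ∈ Finset.range (m - 1), ∏ j : Fin n, ∏ k : Fin n,
        if j ≠ k ∧ (σ j : ℕ) ≤ i' ∧ (σ k : ℕ) ≤ i' then blockFactor q h (a j / a k) else 1) *
      ∏ k : Fin n, ∏ l : Fin n, if σ k < σ l then flagFactor q h (a k / a l) else 1 :=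
  rfl

lemma blockFactor_mul_blockFactor_inv {q h : ℂ} (hq0 : q ≠ 0) (hh0 : h ≠ 0) (x : ℂ) :
    blockFactor q h x * blockFactor q h x⁻¹ = thetaRatio q h x := by
  have e1 : q * (q * x)⁻¹ = x⁻¹ := by field_simp
  have e2 : q * (h⁻¹ * x)⁻¹ = q * h * x⁻¹ := by field_simp
  have e3 : q * (q * h * x)⁻¹ = h⁻¹ * x⁻¹ := by field_simp
  rw [blockFactor, blockFactor, thetaRatio, theta, theta, theta, theta, e1, e2, e3]
  ring

lemma blockFactor_pair_q_mul {q h : ℂ} (hq : ‖q‖ < 1) (hq0 : q ≠ 0) (hh0 : h ≠ 0) {x : ℂ}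
    (hx : x ≠ 0) :
    blockFactor q h (q * x) * blockFactor q h (q * x)⁻¹ =
      blockFactor q h x * blockFactor q h x⁻¹ := by
  rw [blockFactor_mul_blockFactor_inv hq0 hh0, blockFactor_mul_blockFactor_inv hq0 hh0,
    thetaRatio_q_mul hq hq0 hh0 hx]

lemma flagFactor_q_mul {q h x : ℂ} (hq : ‖q‖ < 1) (hx : 1 - q * x ≠ 0)
    (hPhi : Phi q (h⁻¹ * x) ≠ 0) :
    flagFactor q h (q * x) = (1 - h⁻¹ * x) / (1 - q * x) * flagFactor q h x := by
  have hden := Phi_eq_one_sub_mul hq (h⁻¹ * x)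
  rw [mul_left_comm] at hden
  obtain ⟨hhx, -⟩ := mul_ne_zero_iff.mp (hden ▸ hPhi)
  rw [flagFactor, flagFactor, hden, Phi_eq_one_sub_mul hq (q * x), div_mul_div_comm,
    mul_left_comm (1 - h⁻¹ * x), mul_div_mul_left _ _ hx, mul_div_mul_left _ _ hhx]

lemma flagFactor_div_q {q h x : ℂ} (hq : ‖q‖ < 1) (hq0 : q ≠ 0) :
    flagFactor q h (x / q) = (1 - x) / (1 - x / (q * h)) * flagFactor q h x := by
  have hqx : q * (x / q) = x := mul_div_cancel₀ x hq0
  have hden := Phi_eq_one_sub_mul hq (h⁻¹ * (x / q))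
  rw [mul_left_comm, hqx] at hden
  rw [flagFactor, flagFactor, hqx, hden, Phi_eq_one_sub_mul hq x, div_mul_div_comm,
    show h⁻¹ * (x / q) = x / (q * h) by ring]

section Update

variable {ι : Type*} [Fintype ι] [DecidableEq ι] {q h : ℂ}

open Function

lemma prod_prod_blockFactor_update (hq : ‖q‖ < 1) (hq0 : q ≠ 0) (hh0 : h ≠ 0)
    (P : ι → Prop) [DecidablePred P] (a : ι → ℂ) (ha : ∀ j, a j ≠ 0) (i : ι) :
    (∏ j, ∏ k, if j ≠ k ∧ P j ∧ P k then
        blockFactor q h (update a i (q * a i) j / update a i (q * a i) k) else 1) =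
      ∏ j, ∏ k, if j ≠ k ∧ P j ∧ P k then blockFactor q h (a j / a k) else 1 := by
  set A := update a i (q * a i)
  have hAi : A i = q * a i := update_self ..
  have hA : ∀ j, j ≠ i → A j = a j := fun j hj => update_of_ne hj ..
  rw [prod_prod_eq_prod_erase_mul_of_row_col (c := fun _ => 1) i, Finset.prod_const_one, one_mul]
  · simp
  · intro k hk
    by_cases hP : P i ∧ P k
    · have hik : i ≠ k := fun e => hk e.symm
      have hshift : A i / A k = q * (a i / a k) := by rw [hAi, hA k hk, mul_div_assoc]
      have hshift' : A k / A i = (q * (a i / a k))⁻¹ := by rw [← hshift, inv_div]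
      rw [if_pos ⟨hik, hP⟩, if_pos ⟨hk, hP.2, hP.1⟩, if_pos ⟨hik, hP⟩, if_pos ⟨hk, hP.2, hP.1⟩,
        hshift, hshift', ← inv_div (a i), one_mul,
        blockFactor_pair_q_mul hq hq0 hh0 (div_ne_zero (ha i) (ha k))]
    · have hik : ¬(i ≠ k ∧ P i ∧ P k) := fun hc => hP hc.2
      have hki : ¬(k ≠ i ∧ P k ∧ P i) := fun hc => hP ⟨hc.2.2, hc.2.1⟩
      simp only [if_neg hik, if_neg hki, mul_one]
  · intro j hj k hk
    rw [hA j hj, hA k hk]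

lemma prod_prod_flagFactor_update {α : Type*} [LinearOrder α] (hq : ‖q‖ < 1) (hq0 : q ≠ 0)
    (σ : ι → α) (a : ι → ℂ) (i : ι)
    (hPhi : ∀ k l, σ k < σ l → Phi q (h⁻¹ * (a k / a l)) ≠ 0)
    (hden : ∀ j, σ i < σ j → 1 - q * (a i / a j) ≠ 0) :
    (∏ k, ∏ l, if σ k < σ l then
        flagFactor q h (update a i (q * a i) k / update a i (q * a i) l) else 1) =
      ((∏ j, if σ j < σ i then (1 - a j / a i) / (1 - a j / (q * h * a i)) else 1) *
        ∏ j, if σ i < σ j then (1 - h⁻¹ * (a i / a j)) / (1 - q * (a i / a j)) else 1) *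
      ∏ k, ∏ l, if σ k < σ l then flagFactor q h (a k / a l) else 1 := by
  set A := update a i (q * a i)
  have hAi : A i = q * a i := update_self ..
  have hA : ∀ j, j ≠ i → A j = a j := fun j hj => update_of_ne hj ..
  set u : ι → ℂ := fun j =>
    if σ i < σ j then (1 - h⁻¹ * (a i / a j)) / (1 - q * (a i / a j)) else 1
  set v : ι → ℂ := fun j =>
    if σ j < σ i then (1 - a j / a i) / (1 - a j / (q * h * a i)) else 1
  have hrow : ∀ k, k ≠ i → (if σ i < σ k then flagFactor q h (A i / A k) else 1) =
      u k * if σ i < σ k then flagFactor q h (a i / a k) else 1 := by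
    intro k hk
    by_cases hσ : σ i < σ k
    · simp only [u, if_pos hσ]
      rw [hAi, hA k hk, mul_div_assoc, flagFactor_q_mul hq (hden k hσ) (hPhi i k hσ)]
    · simp only [u, if_neg hσ, mul_one]
  have hcol : ∀ k, k ≠ i → (if σ k < σ i then flagFactor q h (A k / A i) else 1) =
      v k * if σ k < σ i then flagFactor q h (a k / a i) else 1 := by
    intro k hk
    by_cases hσ : σ k < σ i
    · simp only [v, if_pos hσ]
      rw [hAi, hA k hk, div_mul_eq_div_div_swap, flagFactor_div_q hq hq0, div_div,
        mul_comm (a i)]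
    · simp only [v, if_neg hσ, mul_one]
  rw [prod_prod_eq_prod_erase_mul_of_row_col (c := fun k => v k * u k) i, Finset.prod_mul_distrib,
    Finset.prod_erase _ (by simp [v]), Finset.prod_erase _ (by simp [u])]
  · simp
  · intro k hk
    rw [hrow k hk, hcol k hk]
    ring
  · intro j hj k hk
    rw [hA j hj, hA k hk]

end Update

theorem PhiSep_qshift_general {m n : ℕ} (σ : Fin n → Fin m)
    (q h : ℂ) (a : Fin n → ℂ) (i : Fin n)
    (hq0 : q ≠ 0) (hh0 : h ≠ 0) (ha : ∀ j, a j ≠ 0)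
    (hq2 : ‖q‖ < 1)
    (hPhi : PhiSep q h σ a ≠ 0)
    (hden2 : ∀ A ∈ ({a, Function.update a i (q * a i)} : Set (Fin n → ℂ)),
      ∀ k l : Fin n, σ k < σ l → Phi q (h⁻¹ * (A k / A l)) ≠ 0)
    (hden4 : ∀ j, σ i < σ j → 1 - q * (a i / a j) ≠ 0) :
    PhiSep q h σ (Function.update a i (q * a i)) / PhiSep q h σ a =
      (∏ j : Fin n, if σ j < σ i then (1 - a j / a i) / (1 - a j / (q * h * a i)) else 1) *
        ∏ j : Fin n, if σ i < σ j then (1 - h⁻¹ * (a i / a j)) / (1 - q * (a i / a j)) else 1 := by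
  rw [div_eq_iff hPhi, PhiSep_eq_prod, PhiSep_eq_prod,
    Finset.prod_congr rfl fun i' _ =>
      prod_prod_blockFactor_update hq2 hq0 hh0 (fun j => (σ j : ℕ) ≤ i') a ha i,
    prod_prod_flagFactor_update hq2 hq0 σ a i (hden2 a (Set.mem_insert a _)) hden4]
  ring

/-- The q-shift transformation `T_{a_i}(Φ_f)/Φ_f` in the separated case. -/
theorem PhiSep_qshift {m n : ℕ} (hm : 0 < m) (hn : 0 < n) (σ : Fin n → Fin m)
    (q h : ℂ) (a : Fin n → ℂ) (i : Fin n)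
    (hq0 : q ≠ 0) (hh0 : h ≠ 0) (ha : ∀ j, a j ≠ 0)
    (hq1 : 0 < ‖q‖) (hq2 : ‖q‖ < 1)
    (hPhi : PhiSep q h σ a ≠ 0)
    (hden1 : ∀ A ∈ ({a, Function.update a i (q * a i)} : Set (Fin n → ℂ)),
      ∀ j k : Fin n, j ≠ k → (σ j : ℕ) < m - 1 → (σ k : ℕ) < m - 1 →
        Phi q (h⁻¹ * (A j / A k)) ≠ 0 ∧ Phi q (q * h * (A j / A k)) ≠ 0)
    (hden2 : ∀ A ∈ ({a, Function.update a i (q * a i)} : Set (Fin n → ℂ)),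
      ∀ k l : Fin n, σ k < σ l → Phi q (h⁻¹ * (A k / A l)) ≠ 0)
    (hden3 : ∀ j, σ j < σ i → 1 - a j / (q * h * a i) ≠ 0)
    (hden4 : ∀ j, σ i < σ j → 1 - q * (a i / a j) ≠ 0) :
    PhiSep q h σ (Function.update a i (q * a i)) / PhiSep q h σ a =
      (∏ j : Fin n, if σ j < σ i then (1 - a j / a i) / (1 - a j / (q * h * a i)) else 1) *
        ∏ j : Fin n, if σ i < σ j then (1 - h⁻¹ * (a i / a j)) / (1 - q * (a i / a j)) else 1 :=
  PhiSep_qshift_general σ q h a i hq0 hh0 ha hq2 hPhi hden2 hden4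
end

section
/- Let m ≥ 1, k ∈ {1,…,m}, let w = (w_1,…,w_m) be positive integers, let w', w'' ≥ 1 with w_k = w' + w'', and set w̄ := (w_1,…,w_{k-1}, w', w'', w_{k+1},…,w_m). For nonzero complex numbers h, q and for a vector v = (v_1,…,v_M) of positive integers with variables R_1,…,R_{M-1}, define e_sep(v; R) := Σ_{i=1}^{M} (Σ_{j=0}^{v_i−1} (h²q)^j) · (h²q)^{v_1+⋯+v_{i-1}} · ∏_{l=i}^{M-1} (−h)^{v_l+v_{l+1}} R_l. Let Q̄_1,…,Q̄_m be the variables for w̄ and define the substitution ψ*: Q̄_j ↦ Q_j for j ≤ k−2, Q̄_{k-1} ↦ (−h)^{w''} Q_{k-1} (when k ≥ 2), Q̄_k ↦ (−h)^{−w_k}, Q̄_{k+1} ↦ (−h)^{w'} Q_k (when k ≤ m−1), and Q̄_j ↦ Q_{j-1} for j ≥ k+2. Then e_sep(w̄; ψ*(Q̄)) = e_sep(w; Q) for all nonzero complex Q_1,…,Q_{m-1}. -/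
/-- The eigenvalue `e_sep(v;R)` of the first Macdonald operator in the separated case, for a
weight vector `v = (v_1,…,v_M)` (1-indexed) and Kähler variables `R_1,…,R_{M-1}`; here `ħ = h²`
and `−ħ^{1/2} = −h`. -/
noncomputable def eSep (h q : ℂ) (M : ℕ) (v : ℕ → ℕ) (R : ℕ → ℂ) : ℂ :=
  ∑ i ∈ Finset.Icc 1 M,
    (∑ j ∈ Finset.range (v i), (h ^ 2 * q) ^ j) *
      (h ^ 2 * q) ^ (∑ l ∈ Finset.Icc 1 (i - 1), v l) *
      ∏ l ∈ Finset.Icc i (M - 1), ((-h) ^ (v l + v (l + 1)) * R l)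

/-- The NS5-resolved weight vector `w̄ = (w_1,…,w_{k-1}, w', w'', w_{k+1},…,w_m)` (1-indexed). -/
def wbar (k w' w'' : ℕ) (w : ℕ → ℕ) : ℕ → ℕ := fun j =>
  if j ≤ k - 1 then w j else if j = k then w' else if j = k + 1 then w'' else w (j - 1)

/-- The Kähler specialization `ψ*` attached to the NS5 resolution of the `k`-th brane:
`Q̄_j ↦ Q_j` for `j ≤ k−2`, `Q̄_{k−1} ↦ (−h)^{w''}Q_{k−1}`, `Q̄_k ↦ (−h)^{−w_k}`,
`Q̄_{k+1} ↦ (−h)^{w'}Q_k`, and `Q̄_j ↦ Q_{j−1}` for `j ≥ k+2`. -/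
noncomputable def psiQ (h : ℂ) (k w' w'' wk : ℕ) (Q : ℕ → ℂ) : ℕ → ℂ := fun j =>
  if j ≤ k - 2 then Q j
  else if j = k - 1 then (-h) ^ w'' * Q (k - 1)
  else if j = k then ((-h) ^ wk)⁻¹
  else if j = k + 1 then (-h) ^ w' * Q k
  else Q (j - 1)

/-- Splitting a sum over `[1, d+2]` against a sum over `[1, d+1]`, matching the low range
termwise, the two middle terms against one, and the high range with an index shift. -/
lemma eSep_split_sum (c d : ℕ) (hcd : c ≤ d) (Tb T : ℕ → ℂ)
    (hlow : ∀ i, 1 ≤ i → i ≤ c → Tb i = T i)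
    (hmid : Tb (c + 1) + Tb (c + 1 + 1) = T (c + 1))
    (hhigh : ∀ i, c + 1 + 1 ≤ i → Tb (i + 1) = T i) :
    ∑ i ∈ Finset.Icc 1 (d + 1 + 1), Tb i = ∑ i ∈ Finset.Icc 1 (d + 1), T i := by
  have hIcc : ∀ n : ℕ, Finset.Icc 1 n = Finset.Ioc 0 n := by
    intro n; ext x; simp only [Finset.mem_Icc, Finset.mem_Ioc]; omega
  rw [hIcc, hIcc,
    ← Finset.sum_Ioc_consecutive Tb (Nat.zero_le c) (by omega : c ≤ d + 1 + 1),
    ← Finset.sum_Ioc_consecutive Tb (by omega : c ≤ c + 1 + 1) (by omega : c + 1 + 1 ≤ d + 1 + 1),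
    ← Finset.sum_Ioc_consecutive T (Nat.zero_le c) (by omega : c ≤ d + 1),
    ← Finset.sum_Ioc_consecutive T (by omega : c ≤ c + 1) (by omega : c + 1 ≤ d + 1)]
  have e1 : ∑ i ∈ Finset.Ioc 0 c, Tb i = ∑ i ∈ Finset.Ioc 0 c, T i :=
    Finset.sum_congr rfl fun i hi => by
      have h' := Finset.mem_Ioc.mp hi
      exact hlow i (by omega) h'.2
  have e2 : ∑ i ∈ Finset.Ioc c (c + 1 + 1), Tb i = T (c + 1) := by
    rw [Finset.sum_Ioc_succ_top (by omega : c ≤ c + 1),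
      Finset.sum_Ioc_succ_top (le_refl c), Finset.Ioc_self, Finset.sum_empty, zero_add]
    exact hmid
  have e3 : ∑ i ∈ Finset.Ioc c (c + 1), T i = T (c + 1) := by
    rw [Finset.sum_Ioc_succ_top (le_refl c), Finset.Ioc_self, Finset.sum_empty, zero_add]
  have e4 : ∑ i ∈ Finset.Ioc (c + 1 + 1) (d + 1 + 1), Tb i
      = ∑ i ∈ Finset.Ioc (c + 1) (d + 1), T i := by
    have hmap : (Finset.Ioc (c + 1) (d + 1)).map (addRightEmbedding 1)
        = Finset.Ioc (c + 1 + 1) (d + 1 + 1) := by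
      rw [Finset.map_add_right_Ioc]
    rw [← hmap, Finset.sum_map]
    refine Finset.sum_congr rfl fun i hi => ?_
    have h' := (Finset.mem_Ioc.mp hi).1
    simpa [addRightEmbedding_apply] using hhigh i (by omega)
  rw [e1, e2, e3, e4]

/-- `ψ*(e^{X̄}(Q̄)) = e^{X}(Q)` in the separated case. -/
theorem eSep_NS5_resolution (m k : ℕ) (hm : 1 ≤ m) (hk1 : 1 ≤ k) (hk2 : k ≤ m)
    (w : ℕ → ℕ) (hw : ∀ i, 1 ≤ i → i ≤ m → 0 < w i)
    (w' w'' : ℕ) (hw' : 1 ≤ w') (hw'' : 1 ≤ w'') (hsum : w k = w' + w'')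
    (h q : ℂ) (hh : h ≠ 0) (hq : q ≠ 0)
    (Q : ℕ → ℂ) (hQ : ∀ j, 1 ≤ j → j ≤ m - 1 → Q j ≠ 0) :
    eSep h q (m + 1) (wbar k w' w'' w) (psiQ h k w' w'' (w k) Q) = eSep h q m w Q := by
  obtain ⟨c, rfl⟩ : ∃ c, k = c + 1 := ⟨k - 1, by omega⟩
  obtain ⟨d, rfl⟩ : ∃ d, m = d + 1 := ⟨m - 1, by omega⟩
  have hcd : c ≤ d := by omega
  have ha0 : (-h : ℂ) ≠ 0 := neg_ne_zero.mpr hh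
  unfold eSep
  simp only [Nat.add_sub_cancel]
  set v : ℕ → ℕ := wbar (c + 1) w' w'' w with hvdef
  set R : ℕ → ℂ := psiQ h (c + 1) w' w'' (w (c + 1)) Q with hRdef
  -- evaluation of the resolved weight vector
  have hv_low : ∀ l, l ≤ c → v l = w l := by
    intro l hl; simp only [hvdef, wbar]; rw [if_pos (by omega)]
  have hv_k : v (c + 1) = w' := by
    simp only [hvdef, wbar]; rw [if_neg (by omega)]; simp
  have hv_k1 : v (c + 1 + 1) = w'' := by
    simp only [hvdef, wbar]; rw [if_neg (by omega), if_neg (by omega)]; simp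
  have hv_high : ∀ l, c + 3 ≤ l → v l = w (l - 1) := by
    intro l hl; simp only [hvdef, wbar]
    rw [if_neg (by omega), if_neg (by omega), if_neg (by omega)]
  -- evaluation of the specialized Kähler variables
  have hR_low : ∀ j, j + 1 ≤ c → R j = Q j := by
    intro j hj; simp only [hRdef, psiQ]; rw [if_pos (by omega)]
  have hR_km1 : 1 ≤ c → R c = (-h) ^ w'' * Q c := by
    intro hc; simp only [hRdef, psiQ]
    rw [if_neg (by omega), if_pos (by omega : c = c + 1 - 1)]
    simp only [Nat.add_sub_cancel]
  have hR_k : R (c + 1) = ((-h) ^ (w (c + 1)))⁻¹ := by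
    simp only [hRdef, psiQ]; rw [if_neg (by omega), if_neg (by omega)]; simp
  have hR_k1 : R (c + 1 + 1) = (-h) ^ w' * Q (c + 1) := by
    simp only [hRdef, psiQ]
    rw [if_neg (by omega), if_neg (by omega), if_neg (by omega)]; simp
  have hR_high : ∀ j, c + 3 ≤ j → R j = Q (j - 1) := by
    intro j hj; simp only [hRdef, psiQ]
    rw [if_neg (by omega), if_neg (by omega), if_neg (by omega), if_neg (by omega)]
  -- factorwise comparison of the products
  have fact1 : ∀ l, 1 ≤ l → l ≤ c →
      (-h) ^ (v l + v (l + 1)) * R l = (-h) ^ (w l + w (l + 1)) * Q l := by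
    intro l h1 h2
    rcases Nat.lt_or_ge l c with hc | hc
    · rw [hv_low l h2, hv_low (l + 1) (by omega), hR_low l (by omega)]
    · have hlc : l = c := by omega
      subst hlc
      rw [hv_low l le_rfl, hv_k, hR_km1 (by omega), hsum,
        show w l + (w' + w'') = w l + w' + w'' from by omega, pow_add]
      ring
  have fact2 : (-h) ^ (v (c + 1) + v (c + 1 + 1)) * R (c + 1) = 1 := by
    rw [hv_k, hv_k1, hR_k, hsum]
    exact mul_inv_cancel₀ (pow_ne_zero _ ha0)
  have fact3 : ∀ l, c + 1 ≤ l →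
      (-h) ^ (v (l + 1) + v (l + 1 + 1)) * R (l + 1) = (-h) ^ (w l + w (l + 1)) * Q l := by
    intro l hl
    rcases eq_or_lt_of_le hl with hlc | hlc
    · subst hlc
      rw [hv_k1, hv_high (c + 1 + 1 + 1) (by omega), hR_k1]
      simp only [Nat.add_sub_cancel]
      rw [hsum, show w'' + w (c + 1 + 1) = w'' + w (c + 1 + 1) from rfl]
      rw [pow_add, pow_add, pow_add]
      ring
    · rw [hv_high (l + 1) (by omega), hv_high (l + 1 + 1) (by omega),
        hR_high (l + 1) (by omega)]
      simp only [Nat.add_sub_cancel]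
  -- product comparisons
  have prodHigh : ∀ i, c + 1 ≤ i →
      (∏ l ∈ Finset.Icc (i + 1) (d + 1), ((-h) ^ (v l + v (l + 1)) * R l))
        = ∏ l ∈ Finset.Icc i d, ((-h) ^ (w l + w (l + 1)) * Q l) := by
    intro i hi
    have hmap : (Finset.Icc i d).map (addRightEmbedding 1)
        = Finset.Icc (i + 1) (d + 1) := by rw [Finset.map_add_right_Icc]
    rw [← hmap, Finset.prod_map]
    refine Finset.prod_congr rfl fun l hl => ?_
    have hl1 := (Finset.mem_Icc.mp hl).1
    simpa [addRightEmbedding_apply] using fact3 l (le_trans hi hl1)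
  have prodLow : ∀ i, 1 ≤ i → i ≤ c + 1 →
      (∏ l ∈ Finset.Icc i (d + 1), ((-h) ^ (v l + v (l + 1)) * R l))
        = ∏ l ∈ Finset.Icc i d, ((-h) ^ (w l + w (l + 1)) * Q l) := by
    intro i h1 h2
    obtain ⟨i', rfl⟩ : ∃ i', i = i' + 1 := ⟨i - 1, by omega⟩
    rw [Finset.Icc_add_one_left_eq_Ioc, Finset.Icc_add_one_left_eq_Ioc,
      ← Finset.prod_Ioc_consecutive _ (show i' ≤ c by omega) (show c ≤ d + 1 by omega),
      ← Finset.prod_Ioc_consecutive _ (show i' ≤ c by omega) (show c ≤ d by omega)]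
    congr 1
    · refine Finset.prod_congr rfl fun l hl => ?_
      have h' := Finset.mem_Ioc.mp hl
      exact fact1 l (by omega) h'.2
    · rw [← Finset.prod_Ioc_consecutive _ (show c ≤ c + 1 by omega)
        (show c + 1 ≤ d + 1 by omega),
        Nat.Ioc_succ_singleton, Finset.prod_singleton, fact2, one_mul,
        ← Finset.Icc_add_one_left_eq_Ioc, prodHigh (c + 1) le_rfl, Finset.Icc_add_one_left_eq_Ioc]
  -- partial-sum comparisons
  have sumLow : ∀ i, i ≤ c → (∑ l ∈ Finset.Icc 1 i, v l) = ∑ l ∈ Finset.Icc 1 i, w l := by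
    intro i hi
    exact Finset.sum_congr rfl fun l hl =>
      hv_low l (le_trans (Finset.mem_Icc.mp hl).2 hi)
  have sumK : (∑ l ∈ Finset.Icc 1 (c + 1), v l) = (∑ l ∈ Finset.Icc 1 c, w l) + w' := by
    rw [Finset.sum_Icc_succ_top (by omega : 1 ≤ c + 1), sumLow c le_rfl, hv_k]
  have sumHigh : ∀ i, c + 1 ≤ i →
      (∑ l ∈ Finset.Icc 1 (i + 1), v l) = ∑ l ∈ Finset.Icc 1 i, w l := by
    intro i hi
    induction i, hi using Nat.le_induction with
    | base =>
      rw [Finset.sum_Icc_succ_top (by omega : 1 ≤ c + 1 + 1), sumK, hv_k1,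
        Finset.sum_Icc_succ_top (by omega : 1 ≤ c + 1), hsum]
      omega
    | succ i hi ih =>
      rw [Finset.sum_Icc_succ_top (by omega : 1 ≤ i + 1 + 1), ih,
        hv_high (i + 1 + 1) (by omega),
        Finset.sum_Icc_succ_top (by omega : 1 ≤ i + 1)]
      simp only [Nat.add_sub_cancel]
  -- assemble
  refine eSep_split_sum c d hcd _ _ ?_ ?_ ?_
  · -- low terms
    intro i h1 h2
    rw [hv_low i h2, sumLow (i - 1) (by omega), prodLow i h1 (by omega)]
  · -- the two middle terms merge
    simp only [Nat.add_sub_cancel]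
    rw [hv_k, hv_k1, sumLow c le_rfl, sumK, prodLow (c + 1) (by omega) le_rfl,
      prodHigh (c + 1) le_rfl, hsum, Finset.sum_range_add]
    have hgeom : (∑ j ∈ Finset.range w'', (h ^ 2 * q) ^ (w' + j))
        = (h ^ 2 * q) ^ w' * ∑ j ∈ Finset.range w'', (h ^ 2 * q) ^ j := by
      rw [Finset.mul_sum]
      exact Finset.sum_congr rfl fun j _ => pow_add _ _ _
    rw [hgeom, pow_add]
    ring
  · -- high terms, shifted by one
    intro i hi
    obtain ⟨j, rfl⟩ : ∃ j, i = j + 1 := ⟨i - 1, by omega⟩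
    simp only [Nat.add_sub_cancel]
    rw [hv_high (j + 1 + 1) (by omega), sumHigh j (by omega), prodHigh (j + 1) (by omega)]
    simp only [Nat.add_sub_cancel]
end

section
/- Let m ≥ 1, k ∈ {1,…,m}, let w = (w_1,…,w_m) be positive integers, let w', w'' ≥ 1 with w_k = w' + w'', and set w̄ := (w_1,…,w_{k-1}, w', w'', w_{k+1},…,w_m). For nonzero complex numbers h, q and for a vector v = (v_1,…,v_M) of positive integers with variables R_1,…,R_{M-1}, define e_cosep(v; R) := Σ_{i=1}^{M} (Σ_{j=0}^{v_i−1} (h²q)^j) · (h²q)^{v_{i+1}+⋯+v_M} · ∏_{l=1}^{i-1} (−h)^{v_l+v_{l+1}} R_l. Let Q̄_1,…,Q̄_m be the variables for w̄ and define the substitution ψ*: Q̄_j ↦ Q_j for j ≤ k−2, Q̄_{k-1} ↦ (−h)^{w''} Q_{k-1} (when k ≥ 2), Q̄_k ↦ (−h)^{−w_k}, Q̄_{k+1} ↦ (−h)^{w'} Q_k (when k ≤ m−1), and Q̄_j ↦ Q_{j-1} for j ≥ k+2. Then e_cosep(w̄; ψ*(Q̄)) = e_cosep(w; Q) for all nonzero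 complex Q_1,…,Q_{m-1}. -/
/-- The eigenvalue `e_cosep(v;R)` of the first Macdonald operator in the co-separated case,
for a weight vector `v = (v_1,…,v_M)` (1-indexed) and Kähler variables `R_1,…,R_{M-1}`;
here `ħ = h²` and `−ħ^{1/2} = −h`. -/
noncomputable def eCosep (h q : ℂ) (M : ℕ) (v : ℕ → ℕ) (R : ℕ → ℂ) : ℂ :=
  ∑ i ∈ Finset.Icc 1 M,
    (∑ j ∈ Finset.range (v i), (h ^ 2 * q) ^ j) *
      (h ^ 2 * q) ^ (∑ l ∈ Finset.Icc (i + 1) M, v l) *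
      ∏ l ∈ Finset.Icc 1 (i - 1), ((-h) ^ (v l + v (l + 1)) * R l)

/-!
Under `ψ*` the factor `(-h)^(w̄_k + w̄_{k+1}) Q̄_k` of the products in `e_cosep(w̄)` becomes
`(-h)^(w' + w'' - w_k) = 1`, while its neighbours absorb the powers `(-h)^w''` and `(-h)^w'` and
turn into the factors of `e_cosep(w)` at `k - 1` and `k`. Hence the summands of `e_cosep(w̄)`
agree with those of `e_cosep(w)` up to an index shift, except that the two summands at `k` and
`k + 1` recombine into the `k`-th one via `[w']_x x^w'' + [w'']_x = [w_k]_x`, where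
`[n]_x = ∑_{j<n} x^j` and `x = h²q`.
-/

open Finset

@[to_additive]
theorem prod_Icc_succ_eq_of_merge {M : Type*} [CommMonoid M] {f g : ℕ → M} {a k n : ℕ}
    (hak : a ≤ k) (hlt : ∀ i, a ≤ i → i < k → g i = f i) (hk : g k * g (k + 1) = f k)
    (hgt : ∀ i, k < i → g (i + 1) = f i) (hkn : k ≤ n) :
    ∏ i ∈ Icc a (n + 1), g i = ∏ i ∈ Icc a n, f i := by
  induction n, hkn using Nat.le_induction with
  | base =>
    have hbelow : ∏ i ∈ Ico a k, g i = ∏ i ∈ Ico a k, f i :=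
      prod_congr rfl fun i hi => hlt i (mem_Ico.1 hi).1 (mem_Ico.1 hi).2
    rw [prod_Icc_succ_top (by omega), ← Ico_add_one_right_eq_Icc, prod_Ico_succ_top hak, hbelow,
      mul_assoc, hk, ← prod_Ico_succ_top hak, Ico_add_one_right_eq_Icc]
  | succ n hkn ih =>
    rw [prod_Icc_succ_top (by omega), ih, prod_Icc_succ_top (by omega), hgt (n + 1) (by omega)]

theorem sum_Icc_add_one_add_one {M : Type*} [AddCommMonoid M] (f : ℕ → M) (a b : ℕ) :
    ∑ i ∈ Icc (a + 1) (b + 1), f i = ∑ i ∈ Icc a b, f (i + 1) := by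
  rw [← map_add_right_Icc, sum_map]
  rfl

theorem geom_sum_add {R : Type*} [Semiring R] (x : R) (a b : ℕ) :
    ∑ j ∈ range (a + b), x ^ j = (∑ j ∈ range a, x ^ j) * x ^ b + ∑ j ∈ range b, x ^ j := by
  rw [add_comm a b, sum_range_add, add_comm, sum_mul]
  congr 1
  exact sum_congr rfl fun j _ => by rw [← pow_add, add_comm]

noncomputable def cosepFactor (h : ℂ) (v : ℕ → ℕ) (R : ℕ → ℂ) (l : ℕ) : ℂ :=
  (-h) ^ (v l + v (l + 1)) * R l

noncomputable def cosepTerm (h q : ℂ) (M : ℕ) (v : ℕ → ℕ) (R : ℕ → ℂ) (i : ℕ) : ℂ :=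
  (∑ j ∈ range (v i), (h ^ 2 * q) ^ j) * (h ^ 2 * q) ^ (∑ l ∈ Icc (i + 1) M, v l) *
    ∏ l ∈ Icc 1 (i - 1), cosepFactor h v R l

theorem eCosep_eq_sum_cosepTerm (h q : ℂ) (M : ℕ) (v : ℕ → ℕ) (R : ℕ → ℂ) :
    eCosep h q M v R = ∑ i ∈ Icc 1 M, cosepTerm h q M v R i := rfl

section Resolution

variable {h q : ℂ} {k w' w'' wk m j : ℕ} {w : ℕ → ℕ} {Q : ℕ → ℂ}

theorem wbar_of_lt (hj : j < k) : wbar k w' w'' w j = w j := if_pos (by omega)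

theorem wbar_self (hk : 0 < k) : wbar k w' w'' w k = w' := by
  simp only [wbar]
  split_ifs <;> first | rfl | omega

theorem wbar_succ_self : wbar k w' w'' w (k + 1) = w'' := by
  simp only [wbar]
  split_ifs <;> first | rfl | omega

theorem wbar_succ_of_lt (hj : k < j) : wbar k w' w'' w (j + 1) = w j := by
  simp only [wbar]
  split_ifs <;> first | rfl | omega

theorem psiQ_of_add_two_le (hj : j + 2 ≤ k) : psiQ h k w' w'' wk Q j = Q j := if_pos (by omega)

theorem psiQ_of_add_one_eq (hj : 0 < j) (hjk : j + 1 = k) :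
    psiQ h k w' w'' wk Q j = (-h) ^ w'' * Q j := by
  subst hjk
  simp only [psiQ]
  split_ifs <;> first | rfl | omega

theorem psiQ_self (hk : 0 < k) : psiQ h k w' w'' wk Q k = ((-h) ^ wk)⁻¹ := by
  simp only [psiQ]
  split_ifs <;> first | rfl | omega

theorem psiQ_succ_self : psiQ h k w' w'' wk Q (k + 1) = (-h) ^ w' * Q k := by
  simp only [psiQ]
  split_ifs <;> first | rfl | omega

theorem psiQ_succ_of_lt (hj : k < j) : psiQ h k w' w'' wk Q (j + 1) = Q j := by
  simp only [psiQ]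
  split_ifs <;> first | rfl | omega

theorem cosepFactor_wbar_of_lt (hsum : w k = w' + w'') {l : ℕ} (hl : 0 < l) (hlk : l < k) :
    cosepFactor h (wbar k w' w'' w) (psiQ h k w' w'' (w k) Q) l = cosepFactor h w Q l := by
  unfold cosepFactor
  rw [wbar_of_lt hlk]
  rcases (show l + 1 < k ∨ l + 1 = k by omega) with hlk' | rfl
  · rw [wbar_of_lt hlk', psiQ_of_add_two_le hlk']
  · rw [wbar_self (by omega), psiQ_of_add_one_eq hl rfl, hsum]
    ring

theorem cosepFactor_wbar_self (hh : h ≠ 0) (hk : 0 < k) (hsum : w k = w' + w'') :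
    cosepFactor h (wbar k w' w'' w) (psiQ h k w' w'' (w k) Q) k = 1 := by
  rw [cosepFactor, wbar_self hk, wbar_succ_self, psiQ_self hk, ← hsum,
    mul_inv_cancel₀ (pow_ne_zero _ (neg_ne_zero.2 hh))]

theorem cosepFactor_wbar_succ_of_le (hsum : w k = w' + w'') {l : ℕ} (hkl : k ≤ l) :
    cosepFactor h (wbar k w' w'' w) (psiQ h k w' w'' (w k) Q) (l + 1) = cosepFactor h w Q l := by
  unfold cosepFactor
  rcases hkl.eq_or_lt with rfl | hkl
  · rw [wbar_succ_self, wbar_succ_of_lt (Nat.lt_succ_self k), psiQ_succ_self, hsum]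
    ring
  · rw [wbar_succ_of_lt hkl, wbar_succ_of_lt (by omega), psiQ_succ_of_lt hkl]

theorem prod_cosepFactor_wbar_of_lt (hsum : w k = w' + w'') {n : ℕ} (hnk : n < k) :
    ∏ l ∈ Icc 1 n, cosepFactor h (wbar k w' w'' w) (psiQ h k w' w'' (w k) Q) l =
      ∏ l ∈ Icc 1 n, cosepFactor h w Q l :=
  prod_congr rfl fun l hl => cosepFactor_wbar_of_lt hsum (mem_Icc.1 hl).1 (by grind)

theorem prod_cosepFactor_wbar (hh : h ≠ 0) (hk : 0 < k) (hsum : w k = w' + w'') {n : ℕ}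
    (hkn : k ≤ n + 1) :
    ∏ l ∈ Icc 1 (n + 1), cosepFactor h (wbar k w' w'' w) (psiQ h k w' w'' (w k) Q) l =
      ∏ l ∈ Icc 1 n, cosepFactor h w Q l := by
  rcases (show k = n + 1 ∨ k ≤ n by omega) with rfl | hkn
  · rw [prod_Icc_succ_top (by omega), cosepFactor_wbar_self hh hk hsum, mul_one,
      prod_cosepFactor_wbar_of_lt hsum (Nat.lt_succ_self n)]
  · exact prod_Icc_succ_eq_of_merge hk (fun l hl hlk => cosepFactor_wbar_of_lt hsum hl hlk)
      (by rw [cosepFactor_wbar_self hh hk hsum, one_mul, cosepFactor_wbar_succ_of_le hsum le_rfl])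
      (fun l hkl => cosepFactor_wbar_succ_of_le hsum hkl.le) hkn

theorem sum_Icc_wbar_of_lt (hsum : w k = w' + w'') {i : ℕ} (hik : i < k) (hkm : k ≤ m) :
    ∑ l ∈ Icc (i + 1) (m + 1), wbar k w' w'' w l = ∑ l ∈ Icc (i + 1) m, w l :=
  sum_Icc_succ_eq_of_merge hik (fun _ _ hlk => wbar_of_lt hlk)
    (by rw [wbar_self (by omega), wbar_succ_self, hsum]) (fun _ hkl => wbar_succ_of_lt hkl) hkm

theorem sum_Icc_wbar_of_le {i : ℕ} (hki : k ≤ i) :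
    ∑ l ∈ Icc (i + 1 + 1) (m + 1), wbar k w' w'' w l = ∑ l ∈ Icc (i + 1) m, w l := by
  rw [sum_Icc_add_one_add_one]
  exact sum_congr rfl fun l hl => wbar_succ_of_lt (by grind)

theorem sum_Icc_wbar_self (hkm : k ≤ m) :
    ∑ l ∈ Icc (k + 1) (m + 1), wbar k w' w'' w l = w'' + ∑ l ∈ Icc (k + 1) m, w l := by
  rw [← insert_Icc_add_one_left_eq_Icc (by omega), sum_insert (by simp), wbar_succ_self,
    sum_Icc_wbar_of_le le_rfl]

theorem cosepTerm_wbar_of_lt (hsum : w k = w' + w'') {i : ℕ} (hik : i < k) (hkm : k ≤ m) :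
    cosepTerm h q (m + 1) (wbar k w' w'' w) (psiQ h k w' w'' (w k) Q) i =
      cosepTerm h q m w Q i := by
  rw [cosepTerm, cosepTerm, wbar_of_lt hik, sum_Icc_wbar_of_lt hsum hik hkm,
    prod_cosepFactor_wbar_of_lt hsum (by omega)]

theorem cosepTerm_wbar_self_add_succ (hh : h ≠ 0) (hk : 0 < k) (hkm : k ≤ m)
    (hsum : w k = w' + w'') :
    cosepTerm h q (m + 1) (wbar k w' w'' w) (psiQ h k w' w'' (w k) Q) k +
        cosepTerm h q (m + 1) (wbar k w' w'' w) (psiQ h k w' w'' (w k) Q) (k + 1) =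
      cosepTerm h q m w Q k := by
  obtain ⟨n, rfl⟩ : ∃ n, k = n + 1 := ⟨k - 1, by omega⟩
  simp only [cosepTerm, Nat.add_sub_cancel]
  rw [wbar_self hk, wbar_succ_self, sum_Icc_wbar_self hkm, sum_Icc_wbar_of_le le_rfl,
    prod_cosepFactor_wbar_of_lt hsum (Nat.lt_succ_self n), prod_cosepFactor_wbar hh hk hsum le_rfl,
    hsum, geom_sum_add, pow_add]
  ring

theorem cosepTerm_wbar_succ_of_lt (hh : h ≠ 0) (hk : 0 < k) (hsum : w k = w' + w'') {i : ℕ}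
    (hki : k < i) :
    cosepTerm h q (m + 1) (wbar k w' w'' w) (psiQ h k w' w'' (w k) Q) (i + 1) =
      cosepTerm h q m w Q i := by
  obtain ⟨n, rfl⟩ : ∃ n, i = n + 1 := ⟨i - 1, by omega⟩
  simp only [cosepTerm, Nat.add_sub_cancel]
  rw [wbar_succ_of_lt hki, sum_Icc_wbar_of_le hki.le, prod_cosepFactor_wbar hh hk hsum hki.le]

end Resolution

theorem eCosep_NS5_resolution_general (m k : ℕ) (hk1 : 1 ≤ k) (hk2 : k ≤ m)
    (w : ℕ → ℕ) (w' w'' : ℕ) (hsum : w k = w' + w'')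
    (h q : ℂ) (hh : h ≠ 0) (Q : ℕ → ℂ) :
    eCosep h q (m + 1) (wbar k w' w'' w) (psiQ h k w' w'' (w k) Q) = eCosep h q m w Q := by
  rw [eCosep_eq_sum_cosepTerm, eCosep_eq_sum_cosepTerm]
  exact sum_Icc_succ_eq_of_merge hk1 (fun _ _ hik => cosepTerm_wbar_of_lt hsum hik hk2)
    (cosepTerm_wbar_self_add_succ hh hk1 hk2 hsum)
    (fun _ hki => cosepTerm_wbar_succ_of_lt hh hk1 hsum hki) hk2

/-- `ψ*(e^{X̄}(Q̄)) = e^{X}(Q)` in the co-separated case. -/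
theorem eCosep_NS5_resolution (m k : ℕ) (hm : 1 ≤ m) (hk1 : 1 ≤ k) (hk2 : k ≤ m)
    (w : ℕ → ℕ) (hw : ∀ i, 1 ≤ i → i ≤ m → 0 < w i)
    (w' w'' : ℕ) (hw' : 1 ≤ w') (hw'' : 1 ≤ w'') (hsum : w k = w' + w'')
    (h q : ℂ) (hh : h ≠ 0) (hq : q ≠ 0)
    (Q : ℕ → ℂ) (hQ : ∀ j, 1 ≤ j → j ≤ m - 1 → Q j ≠ 0) :
    eCosep h q (m + 1) (wbar k w' w'' w) (psiQ h k w' w'' (w k) Q) = eCosep h q m w Q :=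
  eCosep_NS5_resolution_general m k hk1 hk2 w w' w'' hsum h q hh Q
end

section
/- Let m ≥ 1, k ∈ {1,…,m}, let w = (w_1,…,w_m) be positive integers, let w', w'' ≥ 1 with w_k = w' + w'', and set w̄ := (w_1,…,w_{k-1}, w', w'', w_{k+1},…,w_m) ∈ (ℤ_{>0})^{m+1}. Let h, q, Q_1,…,Q_{m-1} be nonzero complex numbers, let Q̄_1,…,Q̄_m be variables, and let ψ* be the substitution Q̄_j ↦ Q_j for j ≤ k−2, Q̄_{k-1} ↦ (−h)^{w''} Q_{k-1}, Q̄_k ↦ (−h)^{−w_k}, Q̄_{k+1} ↦ (−h)^{w'} Q_k, Q̄_j ↦ Q_{j-1} for j ≥ k+2. Then for every p ∈ {1,…,m+1}, the value of ∏_{l=p}^{m} (−h)^{w̄_l + w̄_{l+1}} Q̄_l under ψ* equals ∏_{l=p̂}^{m-1} (−h)^{w_l + w_{l+1}} Q_l, where p̂ = p if p ≤ k and p̂ = p − 1 if p ≥ k+1. -/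
/-- The hopping coefficients of the gauge-transformed Macdonald operator are compatible with
the NS5 resolution (separated case): for every `p ∈ {1,…,m+1}`, the value of
`∏_{l=p}^{m} (−h)^{w̄_l + w̄_{l+1}} Q̄_l` under `ψ*` equals
`∏_{l=p̂}^{m-1} (−h)^{w_l + w_{l+1}} Q_l` where `p̂ = p` if `p ≤ k` and `p̂ = p − 1` otherwise. -/
theorem psiQ_hopping_sep (m k : ℕ) (hm : 1 ≤ m) (hk1 : 1 ≤ k) (hk2 : k ≤ m)
    (w : ℕ → ℕ) (hw : ∀ i, 1 ≤ i → i ≤ m → 0 < w i)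
    (w' w'' : ℕ) (hw' : 1 ≤ w') (hw'' : 1 ≤ w'') (hsum : w k = w' + w'')
    (h q : ℂ) (hh : h ≠ 0) (hq : q ≠ 0)
    (Q : ℕ → ℂ) (hQ : ∀ j, 1 ≤ j → j ≤ m - 1 → Q j ≠ 0)
    (p : ℕ) (hp1 : 1 ≤ p) (hp2 : p ≤ m + 1) :
    (∏ l ∈ Finset.Icc p m,
        ((-h) ^ (wbar k w' w'' w l + wbar k w' w'' w (l + 1)) * psiQ h k w' w'' (w k) Q l)) =
      ∏ l ∈ Finset.Icc (if p ≤ k then p else p - 1) (m - 1),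
        ((-h) ^ (w l + w (l + 1)) * Q l) := by
  have hmh : (-h) ≠ 0 := neg_ne_zero.mpr hh
  obtain ⟨n, hn⟩ : ∃ n, m + 1 - p = n := ⟨_, rfl⟩
  induction n generalizing p with
  | zero =>
    have hpm : p = m + 1 := by omega
    subst hpm
    have h1 : Finset.Icc (m + 1) m = ∅ := by rw [Finset.Icc_eq_empty]; omega
    have h2 : (if m + 1 ≤ k then m + 1 else m + 1 - 1) = m := by
      rw [if_neg (by omega)]; omega
    have h3 : Finset.Icc m (m - 1) = ∅ := by rw [Finset.Icc_eq_empty]; omega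
    rw [h1, h2, h3]
    simp
  | succ n ih =>
    have hpm : p ≤ m := by omega
    have hins : Finset.Icc p m = insert p (Finset.Icc (p + 1) m) := by
      ext x; simp only [Finset.mem_Icc, Finset.mem_insert]; omega
    rw [hins, Finset.prod_insert (by simp only [Finset.mem_Icc]; omega),
      ih (p + 1) (by omega) (by omega) (by omega)]
    by_cases hpk : p ≤ k - 1
    · -- p ≤ k - 1
      have e1 : (if p ≤ k then p else p - 1) = p := if_pos (by omega)
      have e2 : (if p + 1 ≤ k then p + 1 else p + 1 - 1) = p + 1 := if_pos (by omega)
      rw [e1, e2]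
      have hins2 : Finset.Icc p (m - 1) = insert p (Finset.Icc (p + 1) (m - 1)) := by
        ext x; simp only [Finset.mem_Icc, Finset.mem_insert]; omega
      rw [hins2, Finset.prod_insert (by simp only [Finset.mem_Icc]; omega)]
      congr 1
      by_cases h2 : p ≤ k - 2
      · simp only [wbar, psiQ, if_pos hpk, if_pos (show p + 1 ≤ k - 1 by omega), if_pos h2]
      · -- p = k - 1, k ≥ 2
        have hpk1 : p = k - 1 := by omega
        have hk2' : 2 ≤ k := by omega
        have hpk2 : p + 1 = k := by omega
        simp only [wbar, psiQ, if_pos hpk, if_neg (show ¬ p + 1 ≤ k - 1 by omega),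
          if_pos hpk2, if_neg h2, if_pos hpk1]
        rw [hpk1, show k - 1 + 1 = k by omega, hsum, pow_add, pow_add]
        ring
    · by_cases hpk2 : p ≤ k
      · -- p = k
        have hpk3 : p = k := by omega
        have e1 : (if p ≤ k then p else p - 1) = k := by rw [if_pos hpk2, hpk3]
        have e2 : (if p + 1 ≤ k then p + 1 else p + 1 - 1) = k := by
          rw [if_neg (by omega)]; omega
        rw [e1, e2]
        have : ((-h) ^ (wbar k w' w'' w p + wbar k w' w'' w (p + 1)) *
            psiQ h k w' w'' (w k) Q p) = 1 := by
          simp only [wbar, psiQ, hpk3, if_neg (show ¬ k ≤ k - 1 by omega),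
            if_pos rfl, if_neg (show ¬ k + 1 ≤ k - 1 by omega),
            if_neg (show k + 1 ≠ k by omega), if_neg (show ¬ k ≤ k - 2 by omega),
            if_neg (show k ≠ k - 1 by omega), if_true]
          rw [hsum, mul_inv_cancel₀ (pow_ne_zero _ hmh)]
        rw [this, one_mul]
      · -- p ≥ k + 1
        have e1 : (if p ≤ k then p else p - 1) = p - 1 := if_neg hpk2
        have e2 : (if p + 1 ≤ k then p + 1 else p + 1 - 1) = p := by
          rw [if_neg (by omega)]; omega
        rw [e1, e2]
        have hins2 : Finset.Icc (p - 1) (m - 1) = insert (p - 1) (Finset.Icc p (m - 1)) := by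
          ext x; simp only [Finset.mem_Icc, Finset.mem_insert]; omega
        rw [hins2, Finset.prod_insert (by simp only [Finset.mem_Icc]; omega)]
        congr 1
        by_cases h3 : p = k + 1
        · subst h3
          simp only [wbar, psiQ, if_neg (show ¬ k + 1 ≤ k - 1 by omega),
            if_neg (show k + 1 ≠ k by omega), if_pos rfl,
            if_neg (show ¬ k + 1 + 1 ≤ k - 1 by omega),
            if_neg (show k + 1 + 1 ≠ k by omega),
            if_neg (show k + 1 + 1 ≠ k + 1 by omega),
            if_neg (show ¬ k + 1 ≤ k - 2 by omega),
            if_neg (show k + 1 ≠ k - 1 by omega), if_true]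
          rw [show k + 1 - 1 = k by omega, show k + 1 + 1 - 1 = k + 1 by omega,
            hsum, pow_add, pow_add]
          ring
        · have h4 : k + 2 ≤ p := by omega
          simp only [wbar, psiQ, if_neg (show ¬ p ≤ k - 1 by omega),
            if_neg (show p ≠ k by omega), if_neg (show p ≠ k + 1 by omega),
            if_neg (show ¬ p + 1 ≤ k - 1 by omega), if_neg (show p + 1 ≠ k by omega),
            if_neg (show p + 1 ≠ k + 1 by omega), if_neg (show ¬ p ≤ k - 2 by omega),
            if_neg (show p ≠ k - 1 by omega)]
          rw [show p + 1 - 1 = p by omega, show p - 1 + 1 = p by omega]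
end

section
/- Let m, n be positive integers and σ : {1,…,n} → {1,…,m}, and set w_i := #σ^{-1}(i) for 1 ≤ i ≤ m. For i ∈ {1,…,n} let c_i := #{j < i : σ(j) = σ(i)}, and for σ(i) ≤ k ≤ m−1 let c_{i,k} := #{j ∈ {1,…,n} : σ(i) < σ(j) ≤ k+1}. Then the multiset of triples {(σ(i), k, c_i + c_{i,k} + 1) : 1 ≤ i ≤ n, σ(i) ≤ k ≤ m−1} is equal to the multiset {(i, k, j + w_{i+1} + w_{i+2} + ⋯ + w_{k+1}) : 1 ≤ i ≤ m−1, 1 ≤ j ≤ w_i, i ≤ k ≤ m−1}. Consequently, for any function g with values in a commutative monoid and any parameters y_{i,k}, ∏_{i=1}^{n} ∏_{k=σ(i)}^{m-1} g((qħ)^{c_i + c_{i,k} + 1} · y_{σ(i),k}) = ∏_{i=1}^{m-1} ∏_{j=1}^{w_i} ∏_{k=i}^{m-1} g((qħ)^{j + Σ_{l=i}^{k} w_{l+1}} · y_{i,k}). -/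
/-!
Group the indices `a ∈ {1,…,n}` by the fibre `i = σ a`. Counting the `j` with
`σ a < σ j ≤ k + 1` fibre by fibre gives `c_{a,k} = w_{i+1} + ⋯ + w_{k+1}`, so the triples
contributed by `a` depend on `a` only through `c_a`. On a fibre, `c_a` is strictly increasing
in `a` and smaller than `w_i`, hence `a ↦ c_a + 1` is a bijection onto `{1,…,w_i}`. Summing
multisets over the fibres gives the identity; the fibre `i = m` contributes nothing since
then `k` ranges over `Icc m (m - 1) = ∅`. The product identity is its image under
`s ↦ (s.map F).prod`.
-/

/-- `w_i = #σ⁻¹(i)`, the number of `j ∈ {1,…,n}` with `σ(j) = i`. -/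
def wgt (n : ℕ) (σ : ℕ → ℕ) (i : ℕ) : ℕ :=
  ((Finset.Icc 1 n).filter fun j => σ j = i).card

/-- `c_i = #{j < i : σ(j) = σ(i)}`. -/
def cLeft (σ : ℕ → ℕ) (i : ℕ) : ℕ :=
  ((Finset.Ico 1 i).filter fun j => σ j = σ i).card

/-- `c_{i,k} = #{j ∈ {1,…,n} : σ(i) < σ(j) ≤ k+1}`. -/
def cMid (n : ℕ) (σ : ℕ → ℕ) (i k : ℕ) : ℕ :=
  ((Finset.Icc 1 n).filter fun j => σ i < σ j ∧ σ j ≤ k + 1).card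

open Finset

theorem Finset.val_bind_eq_sum {α β : Type*} (s : Finset α) (f : α → Multiset β) :
    s.val.bind f = ∑ a ∈ s, f a := rfl

theorem cMid_eq_sum_wgt (n : ℕ) (σ : ℕ → ℕ) (a k : ℕ) :
    cMid n σ a k = ∑ l ∈ Icc (σ a) k, wgt n σ (l + 1) := by
  have hmaps : ∀ j ∈ {j ∈ Icc 1 n | σ a < σ j ∧ σ j ≤ k + 1}, σ j ∈ Icc (σ a + 1) (k + 1) :=
    fun j hj => mem_Icc.2 (mem_filter.1 hj).2
  rw [cMid, card_eq_sum_card_fiberwise hmaps, ← map_add_right_Icc, sum_map]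
  refine sum_congr rfl fun l hl => ?_
  rw [wgt, filter_filter]
  congr 1
  refine filter_congr fun j _ => ?_
  simp only [addRightEmbedding_apply, mem_Icc] at hl ⊢
  exact ⟨And.right, fun hj => by omega⟩

theorem cLeft_strictMonoOn (σ : ℕ → ℕ) (i : ℕ) :
    StrictMonoOn (cLeft σ) {a | 1 ≤ a ∧ σ a = i} := by
  rintro a ⟨ha, hai⟩ b ⟨-, hbi⟩ hab
  refine card_lt_card ((ssubset_iff_of_subset ?_).2 ⟨a, ?_, by simp⟩)
  · intro j
    simp only [mem_filter, mem_Ico, hai, hbi]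
    omega
  · simp [ha, hab, hai, hbi]

theorem cLeft_succ_injOn_fiber (n : ℕ) (σ : ℕ → ℕ) (i : ℕ) :
    Set.InjOn (cLeft σ · + 1) ({a ∈ Icc 1 n | σ a = i} : Finset ℕ) := by
  have hsub : (({a ∈ Icc 1 n | σ a = i} : Finset ℕ) : Set ℕ) ⊆ {a | 1 ≤ a ∧ σ a = i} :=
    fun a ha => by
      simp only [mem_coe, mem_filter, mem_Icc] at ha
      exact ⟨ha.1.1, ha.2⟩
  exact fun a ha b hb hab =>
    (cLeft_strictMonoOn σ i).injOn.mono hsub ha hb (Nat.succ_injective hab)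

theorem cLeft_lt_wgt (n : ℕ) (σ : ℕ → ℕ) {a : ℕ} (ha : a ∈ Icc 1 n) :
    cLeft σ a < wgt n σ (σ a) := by
  refine card_lt_card ((ssubset_iff_of_subset ?_).2 ⟨a, by simp [ha], by simp⟩)
  intro j
  simp only [mem_filter, mem_Ico, mem_Icc] at ha ⊢
  omega

theorem image_cLeft_succ_fiber (n : ℕ) (σ : ℕ → ℕ) (i : ℕ) :
    {a ∈ Icc 1 n | σ a = i}.image (cLeft σ · + 1) = Icc 1 (wgt n σ i) := by
  refine eq_of_subset_of_card_le (fun c hc => ?_) ?_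
  · obtain ⟨a, ha, rfl⟩ := mem_image.1 hc
    obtain ⟨han, rfl⟩ := mem_filter.1 ha
    simpa [Nat.succ_le_iff] using cLeft_lt_wgt n σ han
  · rw [card_image_of_injOn (cLeft_succ_injOn_fiber n σ i), Nat.card_Icc, Nat.add_sub_cancel, wgt]

theorem sum_fiber_cLeft_succ {A : Type*} [AddCommMonoid A] (n : ℕ) (σ : ℕ → ℕ) (i : ℕ)
    (F : ℕ → A) :
    ∑ a ∈ Icc 1 n with σ a = i, F (cLeft σ a + 1) = ∑ j ∈ Icc 1 (wgt n σ i), F j := by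
  rw [← image_cLeft_succ_fiber, sum_image (cLeft_succ_injOn_fiber n σ i)]

theorem triple_multiset_eq (m n : ℕ) (σ : ℕ → ℕ) (hσ : ∀ i ∈ Icc 1 n, σ i ∈ Icc 1 m) :
    ((Icc 1 n).val.bind fun i =>
        (Icc (σ i) (m - 1)).val.map fun k =>
          ((σ i, k, cLeft σ i + cMid n σ i k + 1) : ℕ × ℕ × ℕ)) =
      ((Icc 1 (m - 1)).val.bind fun i =>
        (Icc 1 (wgt n σ i)).val.bind fun j =>
          (Icc i (m - 1)).val.map fun k =>
            ((i, k, j + ∑ l ∈ Icc i k, wgt n σ (l + 1)) : ℕ × ℕ × ℕ)) := by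
  let row : ℕ → ℕ → Multiset (ℕ × ℕ × ℕ) := fun i j =>
    (Icc i (m - 1)).val.map fun k => (i, k, j + ∑ l ∈ Icc i k, wgt n σ (l + 1))
  simp only [val_bind_eq_sum]
  calc ∑ a ∈ Icc 1 n, (Icc (σ a) (m - 1)).val.map (fun k =>
          ((σ a, k, cLeft σ a + cMid n σ a k + 1) : ℕ × ℕ × ℕ))
      = ∑ a ∈ Icc 1 n, row (σ a) (cLeft σ a + 1) := by
        simp only [row, cMid_eq_sum_wgt, Nat.add_right_comm]
    _ = ∑ i ∈ Icc 1 m, ∑ a ∈ Icc 1 n with σ a = i, row i (cLeft σ a + 1) := by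
        rw [← sum_fiberwise_of_maps_to hσ]
        refine sum_congr rfl fun i _ => sum_congr rfl fun a ha => ?_
        rw [(mem_filter.1 ha).2]
    _ = ∑ i ∈ Icc 1 m, ∑ j ∈ Icc 1 (wgt n σ i), row i j := by
        simp only [sum_fiber_cLeft_succ]
    _ = ∑ i ∈ Icc 1 (m - 1), ∑ j ∈ Icc 1 (wgt n σ i), row i j := by
        refine (sum_subset (Icc_subset_Icc_right (Nat.sub_le m 1)) fun i hi hi' => ?_).symm
        have : m - 1 < i := by simp only [mem_Icc] at hi hi'; omega
        simp [row, Icc_eq_empty_of_lt this]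

theorem vertex_limit_multiset_identity_general (m n : ℕ)
    (σ : ℕ → ℕ) (hσ : ∀ i ∈ Finset.Icc 1 n, σ i ∈ Finset.Icc 1 m)
    {M : Type*} [CommMonoid M] (g : ℂ → M) (y : ℕ → ℕ → ℂ) (q h : ℂ) :
    ((Finset.Icc 1 n).val.bind fun i =>
        (Finset.Icc (σ i) (m - 1)).val.map fun k =>
          ((σ i, k, cLeft σ i + cMid n σ i k + 1) : ℕ × ℕ × ℕ)) =
      ((Finset.Icc 1 (m - 1)).val.bind fun i =>
        (Finset.Icc 1 (wgt n σ i)).val.bind fun j =>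
          (Finset.Icc i (m - 1)).val.map fun k =>
            ((i, k, j + ∑ l ∈ Finset.Icc i k, wgt n σ (l + 1)) : ℕ × ℕ × ℕ)) ∧
    (∏ i ∈ Finset.Icc 1 n, ∏ k ∈ Finset.Icc (σ i) (m - 1),
        g ((q * h) ^ (cLeft σ i + cMid n σ i k + 1) * y (σ i) k)) =
      ∏ i ∈ Finset.Icc 1 (m - 1), ∏ j ∈ Finset.Icc 1 (wgt n σ i), ∏ k ∈ Finset.Icc i (m - 1),
        g ((q * h) ^ (j + ∑ l ∈ Finset.Icc i k, wgt n σ (l + 1)) * y i k) := by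
  have htriples := triple_multiset_eq m n σ hσ
  refine ⟨htriples, ?_⟩
  have hprod := congrArg
    (fun s : Multiset (ℕ × ℕ × ℕ) => (s.map fun t => g ((q * h) ^ t.2.2 * y t.1 t.2.1)).prod)
    htriples
  simpa only [Multiset.map_bind, Multiset.prod_bind, Multiset.map_map, Function.comp_def,
    prod_eq_multiset_prod] using hprod

/-- The combinatorial multiset identity underlying the fixed-point independence of the limit
of the vertex function of the cotangent bundle of a type A partial flag variety, together
with its product consequence. -/
theorem vertex_limit_multiset_identity (m n : ℕ) (hm : 0 < m) (hn : 0 < n)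
    (σ : ℕ → ℕ) (hσ : ∀ i ∈ Finset.Icc 1 n, σ i ∈ Finset.Icc 1 m)
    {M : Type*} [CommMonoid M] (g : ℂ → M) (y : ℕ → ℕ → ℂ) (q h : ℂ) :
    ((Finset.Icc 1 n).val.bind fun i =>
        (Finset.Icc (σ i) (m - 1)).val.map fun k =>
          ((σ i, k, cLeft σ i + cMid n σ i k + 1) : ℕ × ℕ × ℕ)) =
      ((Finset.Icc 1 (m - 1)).val.bind fun i =>
        (Finset.Icc 1 (wgt n σ i)).val.bind fun j =>
          (Finset.Icc i (m - 1)).val.map fun k =>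
            ((i, k, j + ∑ l ∈ Finset.Icc i k, wgt n σ (l + 1)) : ℕ × ℕ × ℕ)) ∧
    (∏ i ∈ Finset.Icc 1 n, ∏ k ∈ Finset.Icc (σ i) (m - 1),
        g ((q * h) ^ (cLeft σ i + cMid n σ i k + 1) * y (σ i) k)) =
      ∏ i ∈ Finset.Icc 1 (m - 1), ∏ j ∈ Finset.Icc 1 (wgt n σ i), ∏ k ∈ Finset.Icc i (m - 1),
        g ((q * h) ^ (j + ∑ l ∈ Finset.Icc i k, wgt n σ (l + 1)) * y i k) :=
  vertex_limit_multiset_identity_general m n σ hσ g y q h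
end

section
/- Define a brane diagram of length N as a pair consisting of types t_1,…,t_N ∈ {D5, NS5} and dimensions d_0, d_1,…,d_N ∈ ℕ with d_0 = d_N = 0, where the brane at position i separates d_{i−1} and d_i. Define the charge of an NS5 brane at position i as (d_i − d_{i−1}) + #{j < i : t_j = D5}, and the charge of a D5 brane at position i as (d_{i−1} − d_i) + #{j > i : t_j = NS5}. Suppose t_i = NS5 and t_{i+1} = D5 and d_{i−1} + d_{i+1} − d_i + 1 ≥ 0, and perform the Hanany–Witten transition at position i: swap t_i and t_{i+1} and replace d_i by d_{i−1} + d_{i+1} − d_i + 1, leaving all other data unchanged. Then, tracking the two swapped branes through the move, the charge of every brane in the diagram is unchanged; in particular the NS5 charge vector and the D5 charge vector (charges of branes of each type read from left to right) are invariant under Hanany–Witten transition. -/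
/-- The two types of 5-branes in a brane diagram. -/
inductive BraneType : Type
  | D5 : BraneType
  | NS5 : BraneType
  deriving DecidableEq

open BraneType

/-- The charge of the 5-brane at position `i` in a brane diagram of length `N` with brane
types `t` (at positions `1,…,N`) and dimensions `d` (with `d 0 = d N = 0`): for an NS5 brane
it is `(d_i − d_{i−1}) + #{j < i : t_j = D5}`, and for a D5 brane it is
`(d_{i−1} − d_i) + #{j > i : t_j = NS5}`. -/
def charge (N : ℕ) (t : ℕ → BraneType) (d : ℕ → ℕ) (i : ℕ) : ℤ :=
  if t i = NS5 then
    (d i : ℤ) - (d (i - 1) : ℤ) + (((Finset.Ico 1 i).filter fun j => t j = D5).card : ℤ)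
  else
    (d (i - 1) : ℤ) - (d i : ℤ) + (((Finset.Ioc i N).filter fun j => t j = NS5).card : ℤ)

/-! After the move the brane types are `t ∘ swap i (i + 1)`. A brane away from the pair sees
the pair either entirely inside or entirely outside the range it counts, and the pair holds one
brane of each type, so its count is unchanged, as are its adjacent dimensions. Each of the two
moved branes instead gains the other one in its count, and the new dimension
`d' i = d (i - 1) + d (i + 1) + 1 - d i` compensates this exactly. -/

open Equiv

lemma swap_apply_mem_iff {α : Type*} [DecidableEq α] {s : Finset α} {a b x : α}
    (hab : a ∈ s ↔ b ∈ s) : swap a b x ∈ s ↔ x ∈ s := by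
  rw [swap_apply_def]
  split_ifs <;> simp_all

lemma card_filter_swap_apply {α : Type*} [DecidableEq α] {s : Finset α} {a b : α}
    (hab : a ∈ s ↔ b ∈ s) (p : α → Prop) [DecidablePred p] :
    {x ∈ s | p (swap a b x)}.card = {x ∈ s | p x}.card :=
  Finset.card_nbij' (swap a b) (swap a b)
    (fun x hx => by simp_all [swap_apply_mem_iff hab])
    (fun x hx => by simp_all [swap_apply_mem_iff hab])
    (fun x _ => swap_apply_self a b x) (fun x _ => swap_apply_self a b x)

lemma List.map_filter_congr {α β : Type*} {l : List α} {p q : α → Bool} {f g : α → β}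
    (hpq : ∀ x ∈ l, p x = q x) (hfg : ∀ x ∈ l, f x = g x) :
    (l.filter p).map f = (l.filter q).map g := by
  rw [List.filter_congr hpq]
  exact List.map_congr_left fun x hx => hfg x (List.mem_of_mem_filter hx)

lemma List.range'_one_eq_append_pair_append {i N : ℕ} (hi1 : 1 ≤ i) (hi2 : i + 1 ≤ N) :
    List.range' 1 N =
      List.range' 1 (i - 1) ++ [i, i + 1] ++ List.range' (i + 2) (N - (i + 1)) := by
  obtain ⟨k, rfl⟩ : ∃ k, i = k + 1 := ⟨i - 1, by omega⟩
  obtain ⟨m, rfl⟩ : ∃ m, N = k + 2 + m := ⟨N - (k + 2), by omega⟩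
  simp only [Nat.add_sub_cancel, show k + 2 + m - (k + 1 + 1) = m by omega]
  rw [show k + 2 + m = k + (m + 2) by omega, ← List.range'_append]
  simp [List.range'_succ]
  omega

section HananyWitten

variable {N : ℕ} {t : ℕ → BraneType} {d d' : ℕ → ℕ} {i : ℕ}

lemma charge_comp_swap_of_ne (hi1 : 1 ≤ i) (hi2 : i + 1 ≤ N) (hd' : ∀ k ≠ i, d' k = d k)
    {j : ℕ} (hji : j ≠ i) (hji1 : j ≠ i + 1) :
    charge N (t ∘ swap i (i + 1)) d' j = charge N t d j := by
  have hσj : (t ∘ swap i (i + 1)) j = t j := by simp [swap_apply_of_ne_of_ne hji hji1]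
  unfold charge
  rw [hσj, hd' j hji, hd' (j - 1) (by omega)]
  simp only [Function.comp_apply]
  split_ifs
  · rw [card_filter_swap_apply (p := fun k => t k = D5) (by simp only [Finset.mem_Ico]; omega)]
  · rw [card_filter_swap_apply (p := fun k => t k = NS5) (by simp only [Finset.mem_Ioc]; omega)]

lemma charge_comp_swap_succ (hi1 : 1 ≤ i) (hti : t i = NS5) (hti1 : t (i + 1) = D5)
    (hd' : ∀ k ≠ i, d' k = d k) (hHW : d' i + d i = d (i - 1) + d (i + 1) + 1) :
    charge N (t ∘ swap i (i + 1)) d' (i + 1) = charge N t d i := by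
  unfold charge
  simp only [Function.comp_apply, swap_apply_right, hti, if_true, Nat.add_sub_cancel]
  rw [← Finset.insert_Ico_right_eq_Ico_add_one hi1, Finset.filter_insert, swap_apply_left,
    if_pos hti1, Finset.card_insert_of_notMem (by simp),
    card_filter_swap_apply (p := fun k => t k = D5) (by simp), hd' (i + 1) (by omega)]
  push_cast
  omega

lemma charge_comp_swap_self (hi1 : 1 ≤ i) (hi2 : i + 1 ≤ N) (hti : t i = NS5)
    (hti1 : t (i + 1) = D5) (hd' : ∀ k ≠ i, d' k = d k)
    (hHW : d' i + d i = d (i - 1) + d (i + 1) + 1) :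
    charge N (t ∘ swap i (i + 1)) d' i = charge N t d (i + 1) := by
  unfold charge
  simp only [Function.comp_apply, swap_apply_left, hti1, reduceCtorEq, if_false]
  rw [← Finset.insert_Ioc_add_one_left_eq_Ioc (by omega : i < N), Finset.filter_insert,
    swap_apply_right, if_pos hti, Finset.card_insert_of_notMem (by simp),
    card_filter_swap_apply (p := fun k => t k = NS5) (by simp), hd' (i - 1) (by omega),
    Nat.add_sub_cancel]
  push_cast
  omega

lemma map_charge_filter_comp_swap_of_forall_ne (hi1 : 1 ≤ i) (hi2 : i + 1 ≤ N)
    (hd' : ∀ k ≠ i, d' k = d k) (b : BraneType) {l : List ℕ}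
    (hl : ∀ j ∈ l, j ≠ i ∧ j ≠ i + 1) :
    (l.filter (fun j => decide ((t ∘ swap i (i + 1)) j = b))).map
        (charge N (t ∘ swap i (i + 1)) d') =
      (l.filter (fun j => decide (t j = b))).map (charge N t d) :=
  List.map_filter_congr
    (fun j hj => by simp [swap_apply_of_ne_of_ne (hl j hj).1 (hl j hj).2])
    (fun j hj => charge_comp_swap_of_ne hi1 hi2 hd' (hl j hj).1 (hl j hj).2)

lemma map_charge_filter_comp_swap (hi1 : 1 ≤ i) (hi2 : i + 1 ≤ N) (hti : t i = NS5)
    (hti1 : t (i + 1) = D5) (hd' : ∀ k ≠ i, d' k = d k)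
    (hHW : d' i + d i = d (i - 1) + d (i + 1) + 1) (b : BraneType) :
    ((List.range' 1 N).filter (fun j => decide ((t ∘ swap i (i + 1)) j = b))).map
        (charge N (t ∘ swap i (i + 1)) d') =
      ((List.range' 1 N).filter (fun j => decide (t j = b))).map (charge N t d) := by
  rw [List.range'_one_eq_append_pair_append hi1 hi2]
  simp only [List.filter_append, List.map_append]
  congr 1
  congr 1
  · refine map_charge_filter_comp_swap_of_forall_ne hi1 hi2 hd' b fun j hj => ?_
    rw [List.mem_range'_1] at hj
    omega
  · cases b <;> simp [hti, hti1, charge_comp_swap_succ hi1 hti hti1 hd' hHW,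
      charge_comp_swap_self hi1 hi2 hti hti1 hd' hHW]
  · refine map_charge_filter_comp_swap_of_forall_ne hi1 hi2 hd' b fun j hj => ?_
    rw [List.mem_range'_1] at hj
    omega

end HananyWitten

theorem charge_hananyWitten_invariant_general (N : ℕ) (t : ℕ → BraneType) (d : ℕ → ℕ)
    (i : ℕ) (hi1 : 1 ≤ i) (hi2 : i + 1 ≤ N)
    (hti : t i = NS5) (hti1 : t (i + 1) = D5)
    (hpos : d i ≤ d (i - 1) + d (i + 1) + 1)
    (t' : ℕ → BraneType) (d' : ℕ → ℕ)
    (ht' : t' = fun j => if j = i then D5 else if j = i + 1 then NS5 else t j)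
    (hd' : d' = fun j => if j = i then d (i - 1) + d (i + 1) + 1 - d i else d j) :
    (∀ j, 1 ≤ j → j ≤ N → j ≠ i → j ≠ i + 1 → charge N t' d' j = charge N t d j) ∧
    charge N t' d' (i + 1) = charge N t d i ∧
    charge N t' d' i = charge N t d (i + 1) ∧
    ((List.range' 1 N).filter (fun j => decide (t' j = NS5))).map (charge N t' d') =
      ((List.range' 1 N).filter (fun j => decide (t j = NS5))).map (charge N t d) ∧
    ((List.range' 1 N).filter (fun j => decide (t' j = D5))).map (charge N t' d') =
      ((List.range' 1 N).filter (fun j => decide (t j = D5))).map (charge N t d) := by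
  have ht'_eq : t' = t ∘ swap i (i + 1) := by
    funext j
    rw [ht', Function.comp_apply, swap_apply_def]
    split_ifs <;> simp_all
  have hd'_of_ne : ∀ k ≠ i, d' k = d k := fun k hk => by simp [hd', hk]
  have hHW : d' i + d i = d (i - 1) + d (i + 1) + 1 := by simp [hd', Nat.sub_add_cancel hpos]
  subst ht'_eq
  exact ⟨fun j _ _ hji hji1 => charge_comp_swap_of_ne hi1 hi2 hd'_of_ne hji hji1,
    charge_comp_swap_succ hi1 hti hti1 hd'_of_ne hHW,
    charge_comp_swap_self hi1 hi2 hti hti1 hd'_of_ne hHW,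
    map_charge_filter_comp_swap hi1 hi2 hti hti1 hd'_of_ne hHW NS5,
    map_charge_filter_comp_swap hi1 hi2 hti hti1 hd'_of_ne hHW D5⟩

/-- Invariance of 5-brane charges under Hanany–Witten transition: swapping an adjacent pair
(NS5 at position `i`, D5 at position `i+1`) and replacing `d_i` by `d_{i−1}+d_{i+1}−d_i+1`
leaves the charge of every brane (tracked through the move) unchanged; in particular the NS5
and D5 charge vectors, read from left to right, are invariant. -/
theorem charge_hananyWitten_invariant (N : ℕ) (t : ℕ → BraneType) (d : ℕ → ℕ)
    (hd0 : d 0 = 0) (hdN : d N = 0)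
    (i : ℕ) (hi1 : 1 ≤ i) (hi2 : i + 1 ≤ N)
    (hti : t i = NS5) (hti1 : t (i + 1) = D5)
    (hpos : d i ≤ d (i - 1) + d (i + 1) + 1)
    (t' : ℕ → BraneType) (d' : ℕ → ℕ)
    (ht' : t' = fun j => if j = i then D5 else if j = i + 1 then NS5 else t j)
    (hd' : d' = fun j => if j = i then d (i - 1) + d (i + 1) + 1 - d i else d j) :
    (∀ j, 1 ≤ j → j ≤ N → j ≠ i → j ≠ i + 1 → charge N t' d' j = charge N t d j) ∧
    charge N t' d' (i + 1) = charge N t d i ∧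
    charge N t' d' i = charge N t d (i + 1) ∧
    ((List.range' 1 N).filter (fun j => decide (t' j = NS5))).map (charge N t' d') =
      ((List.range' 1 N).filter (fun j => decide (t j = NS5))).map (charge N t d) ∧
    ((List.range' 1 N).filter (fun j => decide (t' j = D5))).map (charge N t' d') =
      ((List.range' 1 N).filter (fun j => decide (t j = D5))).map (charge N t d) :=
  charge_hananyWitten_invariant_general N t d i hi1 hi2 hti hti1 hpos t' d' ht' hd'
end
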